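/- Let ξ be a unit eigenvector of a Hermitian matrix Z with |Z|ξ = ‖Z‖ξ and ‖Z‖ < π. Then the curve α(t) = e^{itZ} ξ, t ∈ [0,1], on the unit sphere of ℂⁿ satisfies α''(t) = −‖Z‖² α(t), i.e. it is a great-circle geodesic of the sphere of speed ‖Z‖. -/

import Mathlib

open Matrix
open scoped ComplexOrder

noncomputable section

/-- n×n complex matrices -/
abbrev Mat (n : ℕ) := Matrix (Fin n) (Fin n) ℂ

/-- the old `Matrix.PosSemidef.sqrt` (removed from Mathlib), with its old definition -/
noncomputable def posSemidefSqrtOld {n : ℕ} {A : Mat n} (hA : A.PosSemidef) : Mat n :=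
  hA.1.eigenvectorUnitary.1 * diagonal ((↑) ∘ (√·) ∘ hA.1.eigenvalues) *
  (star hA.1.eigenvectorUnitary : Mat n)

theorem posSemidefSqrtOld_isHermitian {n : ℕ} {A : Mat n} (hA : A.PosSemidef) :
    (posSemidefSqrtOld hA).IsHermitian := by
  unfold posSemidefSqrtOld
  have := isHermitian_mul_mul_conjTranspose (hA.1.eigenvectorUnitary.1)
    (isHermitian_diagonal_of_self_adjoint ((↑) ∘ (√·) ∘ hA.1.eigenvalues : Fin n → ℂ)
      (by ext i; simp))
  simpa [Matrix.star_eq_conjTranspose] using this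

/-- modulus |A| = sqrt (Aᴴ A) -/
noncomputable def matAbs {n : ℕ} (A : Mat n) : Mat n :=
  posSemidefSqrtOld (Matrix.posSemidef_conjTranspose_mul_self A)

/-- spectral (operator) norm -/
noncomputable def specNorm {n : ℕ} (A : Mat n) : ℝ :=
  ‖Matrix.toEuclideanCLM (𝕜 := ℂ) (n := Fin n) A‖

/-- Löwner order: `A ≤ B` iff `B - A` is positive semidefinite -/
def loewnerLE {n : ℕ} (A B : Mat n) : Prop := (B - A).PosSemidef

/-- singular values of `A`, arranged in non-increasing order -/
noncomputable def sval {n : ℕ} (A : Mat n) : Fin n → ℝ :=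
  fun i =>
    let e := (posSemidefSqrtOld_isHermitian (Matrix.posSemidef_conjTranspose_mul_self A)).eigenvalues
    (e ∘ Tuple.sort e) i.rev

/-- singular values indexed by naturals (0 beyond the size) -/
noncomputable def svalNat {n : ℕ} (A : Mat n) (k : ℕ) : ℝ :=
  if h : k < n then sval A ⟨k, h⟩ else 0

/-- eigenvalues of a Hermitian matrix, arranged in non-increasing order -/
noncomputable def eigsDesc {n : ℕ} {A : Mat n} (hA : A.IsHermitian) : Fin n → ℝ :=
  fun i => (hA.eigenvalues ∘ Tuple.sort hA.eigenvalues) i.rev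

/-! The curve is `s ↦ exp (s B) ξ` for the operator `B = iZ`, so its second derivative is
`exp (t B) (B² ξ)`. As `Z` is Hermitian, `B² = -Z² = -|Z|²`, and `ξ` is an eigenvector of `|Z|`
for the eigenvalue `‖Z‖`; hence `B² ξ = -‖Z‖² ξ`. -/

theorem posSemidefSqrtOld_mul_self {n : ℕ} {A : Mat n} (hA : A.PosSemidef) :
    posSemidefSqrtOld hA * posSemidefSqrtOld hA = A := by
  set U : Mat n := hA.1.eigenvectorUnitary.1
  have hUU : (star U : Mat n) * U = 1 := Unitary.coe_star_mul_self hA.1.eigenvectorUnitary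
  have hsqrt : ∀ i, (√(hA.1.eigenvalues i) : ℂ) * √(hA.1.eigenvalues i) = hA.1.eigenvalues i :=
    fun i => by rw [← Complex.ofReal_mul, Real.mul_self_sqrt (hA.eigenvalues_nonneg i)]
  conv_rhs => rw [hA.1.spectral_theorem, Unitary.conjStarAlgAut_apply]
  calc posSemidefSqrtOld hA * posSemidefSqrtOld hA
      = U * (diagonal ((↑) ∘ (√·) ∘ hA.1.eigenvalues) * (star U * U) *
          diagonal ((↑) ∘ (√·) ∘ hA.1.eigenvalues)) * star U := by
        simp only [posSemidefSqrtOld, U, mul_assoc]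
    _ = U * diagonal ((↑) ∘ hA.1.eigenvalues) * star U := by
        rw [hUU, mul_one, diagonal_mul_diagonal]
        simp only [Function.comp_apply, hsqrt]
        rfl

theorem matAbs_mul_self_of_isHermitian {n : ℕ} {Z : Mat n} (hZ : Z.IsHermitian) :
    matAbs Z * matAbs Z = Z * Z := by
  rw [matAbs, posSemidefSqrtOld_mul_self, hZ.eq]

theorem toEuclideanCLM_I_smul_apply_apply_of_matAbs_apply {n : ℕ} {Z : Mat n}
    (hZ : Z.IsHermitian) {c : ℝ} {ξ : EuclideanSpace ℂ (Fin n)}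
    (hξ : toEuclideanCLM (𝕜 := ℂ) (matAbs Z) ξ = (c : ℂ) • ξ) :
    toEuclideanCLM (𝕜 := ℂ) (Complex.I • Z) (toEuclideanCLM (𝕜 := ℂ) (Complex.I • Z) ξ)
      = (-(c ^ 2)) • ξ := by
  have hsq : (Complex.I • Z) * (Complex.I • Z) = -(matAbs Z * matAbs Z) := by
    rw [matAbs_mul_self_of_isHermitian hZ, smul_mul_smul_comm, Complex.I_mul_I, neg_one_smul]
  rw [← mul_apply_eq_comp, ← map_mul, hsq, map_neg, map_mul, _root_.neg_apply,
    mul_apply_eq_comp, hξ, map_smul, hξ, smul_smul, ← Complex.ofReal_mul, ← sq,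
    Complex.coe_smul, neg_smul]

section
attribute [local instance] Matrix.linftyOpNormedRing Matrix.linftyOpNormedAlgebra

theorem Matrix.toEuclideanCLM_exp {𝕜 ι : Type*} [RCLike 𝕜] [Fintype ι] [DecidableEq ι]
    (A : Matrix ι ι 𝕜) :
    toEuclideanCLM (𝕜 := 𝕜) (NormedSpace.exp A) = NormedSpace.exp (toEuclideanCLM (𝕜 := 𝕜) A) :=
  NormedSpace.map_exp_of_mem_ball (𝕂 := 𝕜) (toEuclideanCLM (𝕜 := 𝕜) (n := ι))
    (LinearMap.continuous_of_finiteDimensional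
      (toEuclideanCLM (𝕜 := 𝕜) (n := ι)).toAlgEquiv.toLinearMap) A
    ((NormedSpace.expSeries_radius_eq_top 𝕜 (Matrix ι ι 𝕜)).symm ▸ edist_lt_top _ _)

end

theorem deriv_deriv_exp_smul_apply_of_apply_apply {E : Type*} [NormedAddCommGroup E]
    [NormedSpace ℂ E] [CompleteSpace E] (B : E →L[ℂ] E) {v : E} {c : ℝ}
    (hv : B (B v) = c • v) (t : ℝ) :
    deriv (deriv fun s : ℝ => NormedSpace.exp (s • B) v) t = c • NormedSpace.exp (t • B) v := by
  have hderiv (w : E) (s : ℝ) :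
      HasDerivAt (fun u : ℝ => NormedSpace.exp (u • B) w) (NormedSpace.exp (s • B) (B w)) s :=
    ((ContinuousLinearMap.apply ℂ E w).restrictScalars ℝ).hasFDerivAt.comp_hasDerivAt s
      (hasDerivAt_exp_smul_const B s)
  rw [funext fun s => (hderiv v s).deriv, (hderiv (B v) t).deriv, hv,
    ContinuousLinearMap.map_smul_of_tower]

theorem stmt10_general {n : ℕ} (Z : Mat n) (hZ : Z.IsHermitian)
    (ξ : EuclideanSpace ℂ (Fin n))
    (heig : Matrix.toEuclideanCLM (𝕜 := ℂ) (matAbs Z) ξ = (specNorm Z : ℂ) • ξ) :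
    ∀ t : ℝ,
      deriv (deriv (fun s : ℝ =>
          Matrix.toEuclideanCLM (𝕜 := ℂ) (NormedSpace.exp ((s : ℂ) • Complex.I • Z)) ξ)) t
        = (-(specNorm Z ^ 2)) •
            Matrix.toEuclideanCLM (𝕜 := ℂ) (NormedSpace.exp ((t : ℂ) • Complex.I • Z)) ξ := by
  intro t
  set B := toEuclideanCLM (𝕜 := ℂ) (Complex.I • Z)
  have hcurve :
      (fun s : ℝ => toEuclideanCLM (𝕜 := ℂ) (NormedSpace.exp ((s : ℂ) • Complex.I • Z)) ξ) =
        fun s : ℝ => NormedSpace.exp (s • B) ξ := by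
    funext s
    rw [toEuclideanCLM_exp, map_smul, ← algebraMap_smul ℂ s B]
    rfl
  rw [hcurve, congrFun hcurve t]
  exact deriv_deriv_exp_smul_apply_of_apply_apply B
    (toEuclideanCLM_I_smul_apply_apply_of_matAbs_apply hZ heig) t

theorem stmt10 {n : ℕ} (Z : Mat n) (hZ : Z.IsHermitian) (hZn : specNorm Z < Real.pi)
    (ξ : EuclideanSpace ℂ (Fin n)) (hξ : ‖ξ‖ = 1)
    (heig : Matrix.toEuclideanCLM (𝕜 := ℂ) (matAbs Z) ξ = (specNorm Z : ℂ) • ξ) :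
    ∀ t : ℝ,
      deriv (deriv (fun s : ℝ =>
          Matrix.toEuclideanCLM (𝕜 := ℂ) (NormedSpace.exp ((s : ℂ) • Complex.I • Z)) ξ)) t
        = (-(specNorm Z ^ 2)) •
            Matrix.toEuclideanCLM (𝕜 := ℂ) (NormedSpace.exp ((t : ℂ) • Complex.I • Z)) ξ :=
  stmt10_general Z hZ ξ heig

end
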